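/- Let $\alpha > 0$ and $H_\alpha(x) = \alpha G_\alpha(x) + \frac{1}{2\pi}\ln|x|$, where $G_\alpha(x) = \frac{1}{4\pi\alpha}\int_0^\infty \frac{1}{t} e^{-\pi|x|^2/(t\alpha)} e^{-t/(4\pi)}\,dt$ is the Bessel-type fundamental solution of $I-\alpha\Delta$ on $\mathbb{R}^2$. Then $\partial_2 H_\alpha(x) \geq 0$ for every $x$ in the upper half-plane $\{x_2 > 0\}$. -/

import Mathlib

open MeasureTheory Real

noncomputable def besselG (α : ℝ) (x : ℝ × ℝ) : ℝ :=
  (1 / (4 * π * α)) * ∫ t in Set.Ioi (0 : ℝ),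
    (1 / t) * Real.exp (-(π * (x.1 ^ 2 + x.2 ^ 2)) / (t * α)) * Real.exp (-t / (4 * π))

/-- `∂₂ Gα`, the partial derivative of `Gα` in the second variable. -/
noncomputable def d2G (α : ℝ) (x : ℝ × ℝ) : ℝ :=
  deriv (fun y => besselG α (x.1, y)) x.2

/-- `Hα = α Gα + (1/2π) ln|·|`. -/
noncomputable def Hfun (α : ℝ) (x : ℝ × ℝ) : ℝ :=
  α * besselG α x + (1 / (2 * π)) * Real.log (Real.sqrt (x.1 ^ 2 + x.2 ^ 2))

/-- `∂₂ Hα`. -/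
noncomputable def d2H (α : ℝ) (x : ℝ × ℝ) : ℝ :=
  deriv (fun y => Hfun α (x.1, y)) x.2

/-!
Write `Gα(a, y) = (4πα)⁻¹ K(π(a² + y²)/α)` with `K(c) = ∫₀^∞ t⁻¹ e^{-c/t} e^{-t/(4π)} dt`.
Differentiating under the integral sign, `K'(c) = -∫₀^∞ t⁻² e^{-c/t} e^{-t/(4π)} dt`, and dropping
the factor `e^{-t/(4π)} ≤ 1` gives `K'(c) ≥ -∫₀^∞ t⁻² e^{-c/t} dt = -1/c`. Hence
`α ∂₂Gα(x) ≥ -x₂ / (2π|x|²)`, which is exactly cancelled by `∂₂ (ln|x| / 2π) = x₂ / (2π|x|²)`.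
-/

open Set

section SubordinationIntegral

-- The substitution `u = 1/t` (Jacobian `t⁻²`) turns `e^{-c/t} t⁻²` into `e^{-cu}`.
lemma inv_substitution_exp_neg_mul (c : ℝ) : ∀ t ∈ Ioi (0 : ℝ),
    (|(-1 : ℝ)| * t ^ ((-1 : ℝ) - 1)) • exp (-(c * t ^ (-1 : ℝ))) = exp (-(c / t)) / t ^ 2 := by
  intro t (ht : 0 < t)
  rw [smul_eq_mul, show (-1 : ℝ) - 1 = -(2 : ℕ) by norm_num, rpow_neg ht.le, rpow_neg ht.le,
    rpow_one, rpow_natCast, abs_neg, abs_one, div_eq_mul_inv c t]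
  ring

lemma integrableOn_exp_neg_div_div_sq {c : ℝ} (hc : 0 < c) :
    IntegrableOn (fun t : ℝ => exp (-(c / t)) / t ^ 2) (Ioi 0) := by
  have hexp : IntegrableOn (fun u : ℝ => exp (-(c * u))) (Ioi 0) := by
    simpa only [neg_mul] using exp_neg_integrableOn_Ioi 0 hc
  have := (integrableOn_Ioi_comp_rpow_iff _ (p := -1) (by norm_num)).2 hexp
  exact (integrableOn_congr_fun (inv_substitution_exp_neg_mul c) measurableSet_Ioi).1 this

lemma integral_exp_neg_div_div_sq {c : ℝ} (hc : 0 < c) :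
    ∫ t in Ioi 0, exp (-(c / t)) / t ^ 2 = 1 / c := by
  have hsubst := integral_comp_rpow_Ioi (fun u => exp (-(c * u))) (p := -1) (by norm_num)
  rw [setIntegral_congr_fun measurableSet_Ioi (inv_substitution_exp_neg_mul c)] at hsubst
  have hscale := integral_comp_mul_left_Ioi (fun u => exp (-u)) 0 hc
  rw [mul_zero, integral_exp_neg_Ioi_zero, smul_eq_mul, mul_one] at hscale
  rw [hsubst, hscale, one_div]

lemma one_div_mul_exp_neg_div_le {c t : ℝ} (hc : 0 < c) (ht : 0 < t) :
    1 / t * exp (-(c / t)) ≤ 1 / c := by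
  have key : c / t ≤ exp (c / t) := by linarith [add_one_le_exp (c / t)]
  rw [exp_neg, ← one_div, one_div_mul_one_div, one_div_le_one_div (by positivity) hc]
  calc c = t * (c / t) := by field_simp
    _ ≤ t * exp (c / t) := by gcongr

noncomputable def subordinationIntegral (k c : ℝ) : ℝ :=
  ∫ t in Ioi 0, 1 / t * exp (-(c / t)) * exp (-(k * t))

variable {k c : ℝ}

lemma exp_neg_mul_le_one (hk : 0 ≤ k) {t : ℝ} (ht : 0 < t) : exp (-(k * t)) ≤ 1 := by
  rw [exp_le_one_iff, neg_nonpos]; positivity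

lemma integrableOn_exp_neg_div_div_sq_mul_exp (hc : 0 < c) (hk : 0 ≤ k) :
    IntegrableOn (fun t : ℝ => exp (-(c / t)) / t ^ 2 * exp (-(k * t))) (Ioi 0) := by
  refine (integrableOn_exp_neg_div_div_sq hc).mono'
    (by fun_prop : Measurable _).aestronglyMeasurable ?_
  filter_upwards [self_mem_ae_restrict measurableSet_Ioi] with t (ht : 0 < t)
  rw [norm_of_nonneg (by positivity)]
  exact mul_le_of_le_one_right (by positivity) (exp_neg_mul_le_one hk ht)

lemma integral_exp_neg_div_div_sq_mul_exp_le (hc : 0 < c) (hk : 0 ≤ k) :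
    ∫ t in Ioi 0, exp (-(c / t)) / t ^ 2 * exp (-(k * t)) ≤ 1 / c := by
  rw [← integral_exp_neg_div_div_sq hc]
  refine setIntegral_mono_on (integrableOn_exp_neg_div_div_sq_mul_exp hc hk)
    (integrableOn_exp_neg_div_div_sq hc) measurableSet_Ioi fun t (ht : 0 < t) => ?_
  exact mul_le_of_le_one_right (by positivity) (exp_neg_mul_le_one hk ht)

lemma integrableOn_subordinationIntegrand (hc : 0 < c) (hk : 0 < k) :
    IntegrableOn (fun t : ℝ => 1 / t * exp (-(c / t)) * exp (-(k * t))) (Ioi 0) := by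
  refine ((exp_neg_integrableOn_Ioi 0 hk).const_mul (1 / c)).mono'
    (by fun_prop : Measurable _).aestronglyMeasurable ?_
  filter_upwards [self_mem_ae_restrict measurableSet_Ioi] with t (ht : 0 < t)
  rw [norm_of_nonneg (by positivity), neg_mul]
  exact mul_le_mul_of_nonneg_right (one_div_mul_exp_neg_div_le hc ht) (exp_nonneg _)

lemma hasDerivAt_subordinationIntegral (hc : 0 < c) (hk : 0 < k) :
    HasDerivAt (subordinationIntegral k)
      (-∫ t in Ioi 0, exp (-(c / t)) / t ^ 2 * exp (-(k * t))) c := by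
  have hbound : ∀ᵐ t ∂volume.restrict (Ioi 0), ∀ c' ∈ Metric.ball c (c / 2),
      ‖-(exp (-(c' / t)) / t ^ 2 * exp (-(k * t)))‖ ≤ exp (-(c / 2 / t)) / t ^ 2 := by
    filter_upwards [self_mem_ae_restrict measurableSet_Ioi] with t (ht : 0 < t) c' hc'
    have hc'_gt : c / 2 < c' := by
      rw [Metric.mem_ball, Real.dist_eq, abs_sub_lt_iff] at hc'; linarith
    rw [norm_neg, norm_of_nonneg (by positivity)]
    calc exp (-(c' / t)) / t ^ 2 * exp (-(k * t)) ≤ exp (-(c' / t)) / t ^ 2 :=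
          mul_le_of_le_one_right (by positivity) (exp_neg_mul_le_one hk.le ht)
      _ ≤ exp (-(c / 2 / t)) / t ^ 2 := by gcongr
  have hderiv : ∀ᵐ t ∂volume.restrict (Ioi 0), ∀ c' ∈ Metric.ball c (c / 2),
      HasDerivAt (fun c => 1 / t * exp (-(c / t)) * exp (-(k * t)))
        (-(exp (-(c' / t)) / t ^ 2 * exp (-(k * t)))) c' := by
    filter_upwards [self_mem_ae_restrict measurableSet_Ioi] with t (ht : 0 < t) c' _
    refine ((((hasDerivAt_id c').div_const t).neg.exp.const_mul (1 / t)).mul_const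
      _).congr_deriv ?_
    simp only [Pi.neg_apply, id_eq]
    field_simp
  have := (hasDerivAt_integral_of_dominated_loc_of_deriv_le (μ := volume.restrict (Ioi 0))
    (F := fun c t => 1 / t * exp (-(c / t)) * exp (-(k * t)))
    (Metric.ball_mem_nhds c (half_pos hc))
    (.of_forall fun c' => (by fun_prop : Measurable _).aestronglyMeasurable)
    (integrableOn_subordinationIntegrand hc hk)
    (by fun_prop : Measurable _).aestronglyMeasurable hbound
    (integrableOn_exp_neg_div_div_sq (half_pos hc)) hderiv).2
  rwa [integral_neg] at this

lemma neg_one_div_le_deriv_subordinationIntegral (hc : 0 < c) (hk : 0 < k) :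
    -(1 / c) ≤ deriv (subordinationIntegral k) c := by
  rw [(hasDerivAt_subordinationIntegral hc hk).deriv, neg_le_neg_iff]
  exact integral_exp_neg_div_div_sq_mul_exp_le hc hk.le

end SubordinationIntegral

section BesselPotential

lemma besselG_eq_subordinationIntegral (α : ℝ) (x : ℝ × ℝ) :
    besselG α x = 1 / (4 * π * α) *
      subordinationIntegral (1 / (4 * π)) (π * (x.1 ^ 2 + x.2 ^ 2) / α) := by
  unfold besselG subordinationIntegral
  congr 2 with t
  ring_nf

variable {α a b : ℝ}

lemma hasDerivAt_besselG_snd (hα : 0 < α) (hab : 0 < a ^ 2 + b ^ 2) :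
    HasDerivAt (fun y => besselG α (a, y))
      (b / (2 * α ^ 2) * deriv (subordinationIntegral (1 / (4 * π))) (π * (a ^ 2 + b ^ 2) / α))
      b := by
  simp_rw [besselG_eq_subordinationIntegral]
  have hradial : HasDerivAt (fun y => π * (a ^ 2 + y ^ 2) / α) (π * (2 * b) / α) b := by
    simpa using ((hasDerivAt_pow 2 b).const_add (a ^ 2)).const_mul π |>.div_const α
  have hK := (hasDerivAt_subordinationIntegral (k := 1 / (4 * π))
    (c := π * (a ^ 2 + b ^ 2) / α) (by positivity) (by positivity)).differentiableAt
  refine ((hK.hasDerivAt.comp b hradial).const_mul _).congr_deriv ?_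
  field_simp
  ring

lemma hasDerivAt_log_sqrt_sq_add_sq (hab : a ^ 2 + b ^ 2 ≠ 0) :
    HasDerivAt (fun y => log (√(a ^ 2 + y ^ 2))) (b / (a ^ 2 + b ^ 2)) b := by
  simp_rw [log_sqrt (add_nonneg (sq_nonneg a) (sq_nonneg _))]
  have := (((hasDerivAt_pow 2 b).const_add (a ^ 2)).log hab).div_const 2
  refine this.congr_deriv ?_
  field_simp
  ring

lemma hasDerivAt_Hfun_snd (hα : 0 < α) (hab : 0 < a ^ 2 + b ^ 2) :
    HasDerivAt (fun y => Hfun α (a, y))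
      (α * (b / (2 * α ^ 2) *
          deriv (subordinationIntegral (1 / (4 * π))) (π * (a ^ 2 + b ^ 2) / α)) +
        1 / (2 * π) * (b / (a ^ 2 + b ^ 2))) b :=
  ((hasDerivAt_besselG_snd hα hab).const_mul α).add
    ((hasDerivAt_log_sqrt_sq_add_sq hab.ne').const_mul _)

end BesselPotential

/-- `∂₂ Hα ≥ 0` on the upper half-plane, where
`Hα(x) = α Gα(x) + (1/2π) ln|x|` and `Gα` is given by the subordination
formula for the Bessel-type fundamental solution of `I - αΔ`. -/
theorem stmt_7 (α : ℝ) (hα : 0 < α) (x : ℝ × ℝ) (hx : 0 < x.2) :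
    0 ≤ d2H α x := by
  obtain ⟨a, b⟩ := x
  have hb : 0 < b := hx
  have hab : 0 < a ^ 2 + b ^ 2 := by positivity
  have hK := neg_one_div_le_deriv_subordinationIntegral (k := 1 / (4 * π))
    (c := π * (a ^ 2 + b ^ 2) / α) (by positivity) (by positivity)
  rw [d2H, (hasDerivAt_Hfun_snd hα hab).deriv]
  calc (0 : ℝ) = α * (b / (2 * α ^ 2) * -(1 / (π * (a ^ 2 + b ^ 2) / α))) +
        1 / (2 * π) * (b / (a ^ 2 + b ^ 2)) := by
        field_simp
        ring
    _ ≤ _ := by gcongr
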